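/- arXiv:1711.06749 — 3 statements merged into one kernel-verified Lean document; each statement's English description precedes it below -/
import Mathlib

section
/- For any sequences (aᵢ) in ℕ∪{0} and (bᵢ) in ℕ⁺ with a₀ = 0, the subspace X = ⋃ᵢ (aᵢ + bᵢℕ₀) of the Golomb space is superconnected, i.e., for any finitely many nonempty relatively open subsets U₁,…,Uₙ of X, the intersection of their closures in X is nonempty. -/
/-!
Every nonempty open subset of `X` contains a full progression `p + Dℕ₀` of `ℕ+`: a basic Golomb
set around a point of the subset meets the progression of `X` through that point in one.
A point `M` divisible by `D` lies in the Golomb closure of every progression `p + Dℕ₀`: a basic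
neighbourhood `c + dℕ₀` of `M` has `d` coprime to `M`, hence to `D`, and the Chinese remainder
theorem produces a common point. As `a₀ = 0`, the space `X` contains every multiple of `b₀`, in
particular `M = b₀ · ∏ Dᵢ`, which therefore lies in the closure of each `Uᵢ`.
-/

/-- The base of the Golomb topology: arithmetic progressions `{a + b*n : n ≥ 0}`
with coprime `a, b ≥ 1`, viewed inside the positive integers. -/
def golombBasis : Set (Set ℕ+) :=
  {S | ∃ a b : ℕ, 1 ≤ a ∧ 1 ≤ b ∧ Nat.Coprime a b ∧
    S = {x : ℕ+ | ∃ n : ℕ, (x : ℕ) = a + b * n}}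

/-- The Golomb (relatively prime integer) topology on `ℕ+`. -/
instance golombTopology : TopologicalSpace ℕ+ :=
  TopologicalSpace.generateFrom golombBasis

/-- A space is superconnected if the closures of any finitely many nonempty
open sets have nonempty intersection. -/
def Superconnected (X : Type*) [TopologicalSpace X] : Prop :=
  ∀ (n : ℕ) (U : Fin n → Set X), (∀ i, IsOpen (U i)) → (∀ i, (U i).Nonempty) →
    (⋂ i, closure (U i)).Nonempty

def progression (a b : ℕ) : Set ℕ+ :=
  {x | ∃ n, (x : ℕ) = a + b * n}

lemma mem_progression_iff_modEq {a b : ℕ} {x : ℕ+} :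
    x ∈ progression a b ↔ a ≤ x ∧ (x : ℕ) ≡ a [MOD b] := by
  refine ⟨fun ⟨n, hn⟩ => ⟨by omega, by simp [hn, Nat.ModEq]⟩, fun ⟨hax, hx⟩ => ?_⟩
  obtain ⟨n, hn⟩ := (Nat.modEq_iff_dvd' hax).mp hx.symm
  exact ⟨n, by omega⟩

lemma progression_mul_subset {a b p : ℕ} (hp : ∃ n, p = a + b * n) (k : ℕ) :
    progression p (b * k) ⊆ progression a b := by
  obtain ⟨m, rfl⟩ := hp
  rintro x ⟨n, hn⟩
  exact ⟨m + k * n, by rw [hn]; ring⟩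

lemma isTopologicalBasis_golombBasis : TopologicalSpace.IsTopologicalBasis golombBasis := by
  refine ⟨?_, ?_, rfl⟩
  · rintro _ ⟨c₁, d₁, -, hd₁, hcd₁, rfl⟩ _ ⟨c₂, d₂, -, hd₂, hcd₂, rfl⟩ x ⟨⟨m, hm⟩, ⟨k, hk⟩⟩
    have hx₁ : Nat.Coprime x d₁ := by rw [hm]; exact (Nat.coprime_add_mul_left_left c₁ d₁ m).2 hcd₁
    have hx₂ : Nat.Coprime x d₂ := by rw [hk]; exact (Nat.coprime_add_mul_left_left c₂ d₂ k).2 hcd₂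
    refine ⟨progression x (d₁ * d₂),
      ⟨x, d₁ * d₂, x.pos, Nat.one_le_iff_ne_zero.2 (by positivity), hx₁.mul_right hx₂, rfl⟩,
      ⟨0, by ring⟩, fun y hy => ⟨?_, ?_⟩⟩
    · exact progression_mul_subset ⟨m, hm⟩ d₂ hy
    · exact progression_mul_subset ⟨k, hk⟩ d₁ (by rwa [mul_comm d₂])
  · refine Set.eq_univ_of_forall fun x => ⟨progression x 1, ⟨x, 1, x.pos, le_rfl,
      Nat.coprime_one_right _, rfl⟩, 0, by ring⟩

lemma exists_modEq_modEq_ge {m n : ℕ} (hmn : Nat.Coprime m n) (hm : 0 < m) (hn : 0 < n)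
    (r s B : ℕ) : ∃ y, B ≤ y ∧ y ≡ r [MOD m] ∧ y ≡ s [MOD n] := by
  obtain ⟨y₀, hr, hs⟩ := Nat.chineseRemainder hmn r s
  refine ⟨y₀ + m * n * B, ?_, ?_, ?_⟩
  · nlinarith [Nat.mul_pos hm hn]
  · exact (Nat.modEq_iff_dvd' (by omega)).mpr ⟨n * B, by rw [Nat.add_sub_cancel_left]; ring⟩
      |>.symm.trans hr
  · exact (Nat.modEq_iff_dvd' (by omega)).mpr ⟨m * B, by rw [Nat.add_sub_cancel_left]; ring⟩
      |>.symm.trans hs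

lemma mem_closure_progression_of_dvd {p D : ℕ} {M : ℕ+} (hD : 0 < D) (hDM : D ∣ M) :
    M ∈ closure (progression p D) := by
  rw [isTopologicalBasis_golombBasis.mem_closure_iff]
  rintro _ ⟨c, d, hc, hd, hcd, rfl⟩ ⟨k, hk⟩
  have hMd : Nat.Coprime M d := by rw [hk]; exact (Nat.coprime_add_mul_left_left c d k).2 hcd
  obtain ⟨y, hy, hyc, hyp⟩ :=
    exists_modEq_modEq_ge (hMd.coprime_dvd_left hDM).symm hd hD c p (c + p)
  let y' : ℕ+ := ⟨y, by omega⟩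
  exact ⟨y', mem_progression_iff_modEq.2 ⟨show c ≤ y by omega, hyc⟩,
    mem_progression_iff_modEq.2 ⟨show p ≤ y by omega, hyp⟩⟩

lemma exists_progression_subset_image_of_isOpen {S : Set ℕ+} {U : Set S} (hU : IsOpen U)
    {p : S} (hp : p ∈ U) {a b : ℕ} (hb : 0 < b) (hpab : (p : ℕ+) ∈ progression a b)
    (habS : progression a b ⊆ S) :
    ∃ D, 0 < D ∧ progression p D ⊆ Subtype.val '' U := by
  obtain ⟨V, hV, rfl⟩ := isOpen_induced_iff.mp hU
  obtain ⟨_, ⟨c, d, -, hd, -, rfl⟩, hpcd, hcdV⟩ :=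
    isTopologicalBasis_golombBasis.exists_subset_of_mem_open hp hV
  refine ⟨d * b, Nat.mul_pos hd hb, fun x hx => ⟨⟨x, ?_⟩, hcdV ?_, rfl⟩⟩
  · exact habS (progression_mul_subset hpab d (by rwa [mul_comm]))
  · exact progression_mul_subset hpcd b hx

theorem superconnected_union_of_progressions (a : ℕ → ℕ) (b : ℕ → ℕ)
    (hb : ∀ i, 1 ≤ b i) (ha0 : a 0 = 0) :
    Superconnected ↥(⋃ i : ℕ, {x : ℕ+ | ∃ n : ℕ, (x : ℕ) = a i + b i * n}) := by
  intro N U hUopen hUne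
  have hprog : ∀ i, ∃ p D : ℕ, 0 < D ∧ progression p D ⊆ Subtype.val '' U i := by
    intro i
    obtain ⟨q, hq⟩ := hUne i
    obtain ⟨j, hqj⟩ := Set.mem_iUnion.mp q.2
    obtain ⟨D, hD, hsub⟩ := exists_progression_subset_image_of_isOpen (hUopen i) hq (hb j) hqj
      (Set.subset_iUnion (fun j => progression (a j) (b j)) j)
    exact ⟨q, D, hD, hsub⟩
  choose p D hD hsub using hprog
  let M : ℕ+ := ⟨b 0 * ∏ i, D i, Nat.mul_pos (hb 0) (Finset.prod_pos fun i _ => hD i)⟩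
  have hMX : M ∈ ⋃ i : ℕ, {x : ℕ+ | ∃ n : ℕ, (x : ℕ) = a i + b i * n} :=
    Set.mem_iUnion.mpr ⟨0, ∏ i, D i, by simp [M, ha0]⟩
  refine ⟨⟨M, hMX⟩, Set.mem_iInter.mpr fun i => closure_subtype.mpr ?_⟩
  exact closure_mono (hsub i) <| mem_closure_progression_of_dvd (hD i) <|
    dvd_mul_of_dvd_right (Finset.dvd_prod_of_mem D (Finset.mem_univ i)) _
end

section
/- For a non-constant polynomial f(x) = a₀ + a₁x + ⋯ + aₙxⁿ with integer coefficients mapping ℕ⁺ to ℕ⁺, f is a continuous self-map of the Golomb space if and only if a₀ = 0. -/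
/-!
A polynomial map preserves congruences. If `f 0 = 0` then `x ∣ f x`, so every modulus `b` coprime
to `f x` is coprime to `x`, and the neighbourhood `x + b (x f(x) + 1) ℕ` of `x` is mapped into
`f x + b ℕ`. If `a = f 0 ≠ 0`, a Schur-type argument gives a prime `q ∤ a` dividing some value
`f X`. Then `f q ≡ a` is prime to `q`, but every neighbourhood `q + m ℕ` of `q` contains, by the
Chinese remainder theorem, a point `y ≡ X [MOD q]`, and `q ∣ f y` keeps `f y` out of `f q + q ℕ`.
-/

open TopologicalSpace Topology Polynomial

namespace Polynomial

lemma dvd_eval_self_iff {R : Type*} [CommRing R] (f : R[X]) (a : R) :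
    a ∣ f.eval a ↔ a ∣ f.coeff 0 := by
  rw [coeff_zero_eq_eval_zero]
  exact dvd_iff_dvd_of_dvd_sub (by simpa using sub_dvd_eval_sub a 0 f)

lemma exists_eval_ne_and_ne_neg {R : Type*} [CommRing R] [IsDomain R] {f : R[X]}
    (hdeg : 0 < f.natDegree) (c : R) {S : Set R} (hS : S.Infinite) :
    ∃ x ∈ S, f.eval x ≠ c ∧ f.eval x ≠ -c := by
  have hne : ∀ d : R, f + C d ≠ 0 := fun d h =>
    hdeg.ne' (by rw [← natDegree_add_C (a := d), h, natDegree_zero])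
  obtain ⟨x, hxS, hx⟩ := hS.exists_notMem_finite
    (finite_setOfPred_isRoot (mul_ne_zero (hne (-c)) (hne c)))
  simp only [Set.mem_ofPred_eq, IsRoot, eval_mul, eval_add, eval_C, mul_eq_zero, not_or] at hx
  exact ⟨x, hxS, fun h => hx.1 (by rw [h]; ring), fun h => hx.2 (by rw [h]; ring)⟩

lemma exists_prime_dvd_eval_not_dvd_coeff_zero {f : ℤ[X]} (hdeg : 0 < f.natDegree)
    (h0 : f.coeff 0 ≠ 0) :
    ∃ p : ℕ, p.Prime ∧ ¬(p : ℤ) ∣ f.coeff 0 ∧ ∃ X : ℕ, 0 < X ∧ (p : ℤ) ∣ f.eval (X : ℤ) := by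
  set a := f.coeff 0
  -- at `X = a² (s + 1)` we get `f X = a u` with `u ≡ 1 [ZMOD a]`, and any prime factor of `u` works
  have hinj : Function.Injective fun s : ℕ => ((a.natAbs ^ 2 * (s + 1) : ℕ) : ℤ) := by
    intro s t h
    simpa [h0] using h
  obtain ⟨_, ⟨s, rfl⟩, hne, hne_neg⟩ :=
    exists_eval_ne_and_ne_neg hdeg a (Set.infinite_range_of_injective hinj)
  dsimp only at hne hne_neg
  set X := a.natAbs ^ 2 * (s + 1)
  have hX : (X : ℤ) = a * (a * (s + 1)) := by
    rw [Nat.cast_mul, Nat.cast_pow, Int.natAbs_sq]; push_cast; ring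
  obtain ⟨w, hw⟩ : (X : ℤ) ∣ f.eval (X : ℤ) - a := by
    simpa [a, coeff_zero_eq_eval_zero] using sub_dvd_eval_sub (X : ℤ) 0 f
  set u := 1 + a * ((s + 1) * w)
  have hfu : f.eval (X : ℤ) = a * u := by linear_combination hw + w * hX
  have hu : u.natAbs ≠ 1 := fun h => by
    rcases Int.natAbs_eq_iff.1 h with h | h
    · exact hne (by rw [hfu, h]; simp)
    · exact hne_neg (by rw [hfu, h]; simp)
  obtain ⟨p, hp, hpu⟩ := Nat.exists_prime_and_dvd hu
  have hpu' : (p : ℤ) ∣ u := Int.natCast_dvd.2 hpu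
  refine ⟨p, hp, fun hpa => hp.not_dvd_one ?_, X,
    Nat.mul_pos (pow_pos (Int.natAbs_pos.2 h0) 2) s.succ_pos, hfu ▸ dvd_mul_of_dvd_right hpu' a⟩
  have h1 : u - a * ((s + 1) * w) = 1 := by ring
  exact_mod_cast h1 ▸ dvd_sub hpu' (dvd_mul_of_dvd_left hpa _)

end Polynomial

namespace Golomb

def progression (a b : ℕ) : Set ℕ+ := {x | ∃ n : ℕ, (x : ℕ) = a + b * n}

lemma mem_progression {a b : ℕ} {x : ℕ+} : x ∈ progression a b ↔ a ≤ x ∧ a ≡ x [MOD b] := by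
  constructor
  · rintro ⟨n, hn⟩
    exact ⟨hn ▸ Nat.le_add_right a _, by rw [hn, Nat.ModEq, Nat.add_mul_mod_self_left]⟩
  · rintro ⟨hle, hmod⟩
    obtain ⟨n, hn⟩ := (Nat.modEq_iff_dvd' hle).1 hmod
    exact ⟨n, by omega⟩

lemma self_mem_progression (x : ℕ+) (b : ℕ) : x ∈ progression x b := ⟨0, by simp⟩

lemma progression_mem_golombBasis {a b : ℕ} (ha : 0 < a) (hb : 0 < b) (hab : a.Coprime b) :
    progression a b ∈ golombBasis :=
  ⟨a, b, ha, hb, hab, rfl⟩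

lemma coprime_of_mem_progression {a b : ℕ} {x : ℕ+} (hab : a.Coprime b)
    (hx : x ∈ progression a b) : Nat.Coprime x b := by
  obtain ⟨n, hn⟩ := hx
  rw [hn]
  exact (Nat.coprime_add_mul_left_left a b n).mpr hab

lemma progression_subset_of_mem {a b : ℕ} {x : ℕ+} (hx : x ∈ progression a b) :
    progression x b ⊆ progression a b := by
  intro y hy
  rw [mem_progression] at *
  exact ⟨hx.1.trans hy.1, hx.2.trans hy.2⟩

lemma progression_mono {a b c : ℕ} (hbc : b ∣ c) : progression a c ⊆ progression a b := by
  intro y hy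
  rw [mem_progression] at *
  exact ⟨hy.1, hy.2.of_dvd hbc⟩

lemma isTopologicalBasis_golombBasis : IsTopologicalBasis golombBasis := by
  refine ⟨?_, ?_, rfl⟩
  · rintro _ ⟨a, b, ha, hb, hab, rfl⟩ _ ⟨c, d, hc, hd, hcd, rfl⟩ x ⟨hxb, hxd⟩
    refine ⟨progression x (b * d), progression_mem_golombBasis x.pos (Nat.mul_pos hb hd)
      ((coprime_of_mem_progression hab hxb).mul_right (coprime_of_mem_progression hcd hxd)),
      self_mem_progression x _, ?_⟩
    exact Set.subset_inter
      ((progression_mono (dvd_mul_right b d)).trans (progression_subset_of_mem hxb))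
      ((progression_mono (dvd_mul_left d b)).trans (progression_subset_of_mem hxd))
  · refine Set.eq_univ_of_forall fun x =>
      Set.mem_sUnion.2 ⟨progression x 1, ?_, self_mem_progression x 1⟩
    exact progression_mem_golombBasis x.pos one_pos (Nat.coprime_one_right _)

lemma nhds_hasBasis (x : ℕ+) :
    (𝓝 x).HasBasis (fun b : ℕ => 0 < b ∧ Nat.Coprime x b) (progression x) := by
  refine isTopologicalBasis_golombBasis.nhds_hasBasis.to_hasBasis ?_ ?_
  · rintro _ ⟨⟨a, b, -, hb, hab, rfl⟩, hx⟩
    exact ⟨b, ⟨hb, coprime_of_mem_progression hab hx⟩, progression_subset_of_mem hx⟩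
  · rintro b ⟨hb, hxb⟩
    exact ⟨progression x b, ⟨progression_mem_golombBasis x.pos hb hxb, self_mem_progression x b⟩,
      subset_rfl⟩

lemma continuous_iff {g : ℕ+ → ℕ+} :
    Continuous g ↔ ∀ x : ℕ+, ∀ b : ℕ, 0 < b → Nat.Coprime (g x) b →
      ∃ m : ℕ, (0 < m ∧ Nat.Coprime x m) ∧ ∀ y ∈ progression x m, g y ∈ progression (g x) b := by
  simp only [continuous_iff_continuousAt, ContinuousAt,
    (nhds_hasBasis _).tendsto_iff (nhds_hasBasis _), and_imp]

def PreservesCongruences (g : ℕ+ → ℕ+) : Prop :=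
  ∀ (x y : ℕ+) (m : ℕ), (x : ℕ) ≡ y [MOD m] → (g x : ℕ) ≡ g y [MOD m]

namespace PreservesCongruences

variable {g : ℕ+ → ℕ+}

lemma continuous_of_forall_dvd (hg : PreservesCongruences g) (hdvd : ∀ x : ℕ+, (x : ℕ) ∣ g x) :
    Continuous g := by
  refine continuous_iff.2 fun x b hb hgb => ?_
  -- `c` is coprime to `x` and exceeds `g x`, so `g x` is the least residue of `g y` mod `b * c`
  set c := (x : ℕ) * g x + 1
  have hxc : Nat.Coprime x c := by simp [c]
  have hlt : (g x : ℕ) < b * c :=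
    calc (g x : ℕ) < c := Nat.lt_succ_of_le (Nat.le_mul_of_pos_left _ x.pos)
      _ ≤ b * c := Nat.le_mul_of_pos_left c hb
  refine ⟨b * c, ⟨Nat.mul_pos hb (Nat.succ_pos _),
    ((Nat.Coprime.coprime_dvd_left (hdvd x) hgb).mul_right hxc)⟩, fun y hy => ?_⟩
  have hmod : (g x : ℕ) ≡ g y [MOD b * c] := hg x y _ (mem_progression.1 hy).2
  refine mem_progression.2 ⟨?_, hmod.of_mul_right c⟩
  calc (g x : ℕ) = g y % (b * c) := by rw [← hmod, Nat.mod_eq_of_lt hlt]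
    _ ≤ g y := Nat.mod_le _ _

lemma dvd_apply_of_continuous (hg : PreservesCongruences g) (hcont : Continuous g) {q : ℕ}
    (hq : q.Prime) {X : ℕ+} (hX : q ∣ g X) : q ∣ g ⟨q, hq.pos⟩ := by
  by_contra hq_not
  set Q : ℕ+ := ⟨q, hq.pos⟩
  obtain ⟨m, ⟨hm, hQm⟩, hsub⟩ := continuous_iff.1 hcont Q q hq.pos
    (Nat.coprime_comm.1 (hq.coprime_iff_not_dvd.2 hq_not))
  obtain ⟨k, hkQ, hkX⟩ := Nat.chineseRemainder hQm.symm q X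
  set y : ℕ+ := ⟨k + m * q, Nat.add_pos_right _ (Nat.mul_pos hm hq.pos)⟩
  have hyQ : y ∈ progression Q m := by
    refine mem_progression.2 ⟨le_add_left (Nat.le_mul_of_pos_left q hm), ?_⟩
    exact hkQ.symm.trans (Nat.add_mul_mod_self_left k m q).symm
  have hyX : (y : ℕ) ≡ X [MOD q] := (Nat.add_mul_mod_self_right k m q).trans hkX
  have hgQ : (g Q : ℕ) ≡ 0 [MOD q] :=
    (mem_progression.1 (hsub y hyQ)).2.trans ((hg y X q hyX).trans (Nat.modEq_zero_iff_dvd.2 hX))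
  exact hq_not (Nat.modEq_zero_iff_dvd.1 hgQ)

end PreservesCongruences

lemma preservesCongruences_of_eval {f : ℤ[X]} {g : ℕ+ → ℕ+}
    (hg : ∀ x : ℕ+, ((g x : ℕ) : ℤ) = f.eval ((x : ℕ) : ℤ)) : PreservesCongruences g := by
  intro x y m hxy
  rw [← Int.natCast_modEq_iff, Int.modEq_iff_dvd, hg, hg]
  exact (Int.modEq_iff_dvd.1 (Int.natCast_modEq_iff.2 hxy)).trans (sub_dvd_eval_sub _ _ f)

end Golomb

theorem polynomial_continuous_iff_const_zero (f : Polynomial ℤ)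
    (hdeg : 0 < f.natDegree) (g : ℕ+ → ℕ+)
    (hg : ∀ x : ℕ+, ((g x : ℕ) : ℤ) = f.eval ((x : ℕ) : ℤ)) :
    Continuous g ↔ f.coeff 0 = 0 := by
  have hcong := Golomb.preservesCongruences_of_eval hg
  have hdvd_iff (x : ℕ+) : (x : ℕ) ∣ g x ↔ ((x : ℕ) : ℤ) ∣ f.coeff 0 := by
    rw [← Int.natCast_dvd_natCast, hg, dvd_eval_self_iff]
  constructor
  · intro hcont
    by_contra h0
    obtain ⟨p, hp, hpa, X, hX, hpX⟩ := exists_prime_dvd_eval_not_dvd_coeff_zero hdeg h0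
    have hpg : p ∣ g ⟨X, hX⟩ := Int.natCast_dvd_natCast.1 ((hg ⟨X, hX⟩).symm ▸ hpX)
    exact hpa ((hdvd_iff _).1 (hcong.dvd_apply_of_continuous hcont hp hpg))
  · intro h0
    exact hcong.continuous_of_forall_dvd fun x => (hdvd_iff x).2 (h0 ▸ dvd_zero _)
end

section
/- The set of continuous self-maps of the Golomb space has cardinality continuum; in fact the set of increasing progressive functions ℕ⁺ → ℕ⁺ is a closed subset of ℕ^ℕ of cardinality continuum consisting of continuous maps. -/
def dag (x y : ℕ) : ℕ :=
  (Nat.factorization x).prod fun p k => if p ∣ y then 1 else p ^ k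

def Progressive (f : ℕ+ → ℕ+) : Prop :=
  (∀ x : ℕ+, ∀ p : ℕ, p.Prime → p ∣ (x : ℕ) → p ∣ (f x : ℕ)) ∧
  (∀ x y : ℕ+, x < y →
    ((dag ((y : ℕ) - (x : ℕ)) (f x) : ℤ)) ∣ ((f y : ℕ) : ℤ) - ((f x : ℕ) : ℤ))

open Cardinal Finset Polynomial

lemma dag_dvd (m w : ℕ) : dag m w ∣ m := by
  rcases eq_or_ne m 0 with rfl | hm
  · exact dvd_zero _
  conv_rhs => rw [← Nat.prod_factorization_pow_eq_self hm]
  refine Finsupp.prod_dvd_prod_of_subset_of_dvd subset_rfl fun p _ => ?_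
  split_ifs
  exacts [one_dvd _, dvd_rfl]

lemma dvd_dag {b m w : ℕ} (hm : m ≠ 0) (hbm : b ∣ m) (hw : Nat.Coprime w b) :
    b ∣ dag m w := by
  have hb : b ≠ 0 := ne_zero_of_dvd_ne_zero hm hbm
  conv_lhs => rw [← Nat.prod_factorization_pow_eq_self hb]
  refine Finsupp.prod_dvd_prod_of_subset_of_dvd ?_ fun p hp => ?_
  · simpa only [Nat.support_factorization] using Nat.primeFactors_mono hbm hm
  · rw [Nat.support_factorization, Nat.mem_primeFactors] at hp
    have hpw : ¬ p ∣ w := fun h => hp.1.not_dvd_one (hw.gcd_eq_one ▸ Nat.dvd_gcd h hp.2.1)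
    rw [if_neg hpw]
    exact pow_dvd_pow p ((Nat.factorization_le_iff_dvd hb hm).2 hbm p)

lemma progressive_of_dvd_of_sub_dvd {f : ℕ+ → ℕ+} (hdvd : ∀ x : ℕ+, (x : ℕ) ∣ f x)
    (hsub : ∀ x y : ℕ+, ((y : ℕ) : ℤ) - (x : ℕ) ∣ ((f y : ℕ) : ℤ) - (f x : ℕ)) :
    Progressive f := by
  refine ⟨fun x p _ hpx => hpx.trans (hdvd x), fun x y hxy => ?_⟩
  have hdag : (dag ((y : ℕ) - x) (f x) : ℤ) ∣ (((y : ℕ) - x : ℕ) : ℤ) :=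
    Int.natCast_dvd_natCast.2 (dag_dvd _ _)
  rw [Nat.cast_sub (PNat.coe_le_coe _ _ |>.2 hxy.le)] at hdag
  exact hdag.trans (hsub x y)

namespace Progressive

variable {f : ℕ+ → ℕ+}

lemma coprime_of_coprime_apply (hf : Progressive f) {x : ℕ+} {b : ℕ}
    (h : Nat.Coprime (f x) b) : Nat.Coprime x b :=
  Nat.coprime_of_dvd fun p hp hpx hpb =>
    hp.not_dvd_one (h.gcd_eq_one ▸ Nat.dvd_gcd (hf.1 x p hp hpx) hpb)

lemma dvd_sub_apply (hf : Progressive f) (hm : Monotone f) {x z : ℕ+} {b : ℕ} (hxz : x ≤ z)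
    (hb : b ∣ (z : ℕ) - x) (hcop : Nat.Coprime (f x) b) : b ∣ (f z : ℕ) - f x := by
  rcases hxz.eq_or_lt with rfl | hlt
  · simp
  have hfxz : (f x : ℕ) ≤ f z := hm hxz
  have hdag := hf.2 x z hlt
  rw [← Nat.cast_sub hfxz, Int.natCast_dvd_natCast] at hdag
  have hzx : (z : ℕ) - x ≠ 0 := Nat.sub_ne_zero_of_lt hlt
  exact (dvd_dag hzx hb hcop).trans hdag

theorem continuous (hf : Progressive f) (hm : Monotone f) : Continuous f := by
  rw [continuous_generateFrom_iff]
  rintro _ ⟨a, b, -, hb, hab, rfl⟩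
  rw [isOpen_iff_forall_mem_open]
  rintro x ⟨n, hn⟩
  have hcop : Nat.Coprime (f x) b := by rw [hn, Nat.coprime_add_mul_left_left]; exact hab
  refine ⟨{z | ∃ k : ℕ, (z : ℕ) = x + b * k}, ?_,
    TopologicalSpace.isOpen_generateFrom_of_mem
      ⟨x, b, x.pos, hb, hf.coprime_of_coprime_apply hcop, rfl⟩, ⟨0, by simp⟩⟩
  rintro z ⟨k, hk⟩
  have hxz : x ≤ z := by rw [← PNat.coe_le_coe]; omega
  obtain ⟨m, hzm⟩ := hf.dvd_sub_apply hm hxz ⟨k, by omega⟩ hcop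
  have hfxz : (f x : ℕ) ≤ f z := hm hxz
  exact ⟨n + m, by rw [mul_add]; omega⟩

end Progressive

/-- Summing over `range x` loses nothing: the terms with `k ≥ x` vanish. -/
noncomputable def descFactorialSeries (A : Set ℕ) (x : ℕ) : ℕ :=
  x + ∑ k ∈ range x, A.indicator (fun k => x.descFactorial (k + 1)) k

namespace descFactorialSeries

variable (A : Set ℕ)

lemma eq_sum_range {x N : ℕ} (h : x ≤ N) :
    descFactorialSeries A x =
      x + ∑ k ∈ range N, A.indicator (fun k => x.descFactorial (k + 1)) k := by
  refine congrArg (x + ·) (sum_subset (range_subset_range.2 h) fun k _ hk => ?_)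
  have hxk : x < k + 1 := by rw [mem_range] at hk; omega
  exact Set.indicator_apply_eq_zero.2 fun _ => Nat.descFactorial_eq_zero_iff_lt.2 hxk

@[simp]
lemma zero : descFactorialSeries A 0 = 0 := by simp [descFactorialSeries]

lemma strictMono : StrictMono (descFactorialSeries A) := fun x y h => by
  rw [eq_sum_range A h.le, eq_sum_range A le_rfl]
  exact add_lt_add_of_lt_of_le h
    (sum_le_sum fun k _ => Set.indicator_le_indicator (Nat.descFactorial_le _ h.le))

/-- `a - b ∣ p a - p b` for the polynomial `p = X (X - 1) ⋯ (X - k)`. -/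
lemma sub_dvd_sub (x y : ℕ) :
    (y : ℤ) - x ∣ (descFactorialSeries A y : ℤ) - descFactorialSeries A x := by
  rw [eq_sum_range A (N := x + y) (by omega), eq_sum_range A (N := x + y) (by omega)]
  push_cast
  rw [add_sub_add_comm, ← sum_sub_distrib]
  refine dvd_add dvd_rfl (dvd_sum fun k _ => ?_)
  by_cases hk : k ∈ A
  · simpa [hk, descPochhammer_eval_eq_descFactorial] using
      sub_dvd_eval_sub (y : ℤ) x (descPochhammer ℤ (k + 1))
  · simp [hk]

lemma dvd (x : ℕ) : x ∣ descFactorialSeries A x := by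
  simpa using Int.natCast_dvd_natCast.1 (sub_dvd_sub A 0 x)

/-- At `k + 1` the term of index `k` is `(k + 1)! ≠ 0` and the later ones vanish. -/
lemma injective_of_succ {A B : Set ℕ}
    (h : ∀ k, descFactorialSeries A (k + 1) = descFactorialSeries B (k + 1)) : A = B := by
  ext k
  induction k using Nat.strong_induction_on with
  | _ k ih =>
  have hbelow : ∀ j ∈ range k, A.indicator (fun j => (k + 1).descFactorial (j + 1)) j =
      B.indicator (fun j => (k + 1).descFactorial (j + 1)) j := fun j hj =>
    Set.indicator_eq_indicator (ih j (mem_range.1 hj)) rfl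
  have hk := h k
  rw [descFactorialSeries, descFactorialSeries, sum_range_succ, sum_range_succ,
    sum_congr rfl hbelow, add_right_inj, add_right_inj] at hk
  have hpos : (k + 1).descFactorial (k + 1) ≠ 0 := by
    rw [Nat.descFactorial_self]; positivity
  by_cases hA : k ∈ A <;> by_cases hB : k ∈ B <;> simp_all

end descFactorialSeries

noncomputable def descFactorialSeriesPNat (A : Set ℕ) (x : ℕ+) : ℕ+ :=
  ⟨descFactorialSeries A x,
    descFactorialSeries.zero A ▸ descFactorialSeries.strictMono A x.pos⟩

namespace descFactorialSeriesPNat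

lemma strictMono (A : Set ℕ) : StrictMono (descFactorialSeriesPNat A) :=
  fun _ _ h => descFactorialSeries.strictMono A (PNat.coe_lt_coe _ _ |>.2 h)

lemma progressive (A : Set ℕ) : Progressive (descFactorialSeriesPNat A) :=
  progressive_of_dvd_of_sub_dvd (fun x => descFactorialSeries.dvd A x)
    fun x y => descFactorialSeries.sub_dvd_sub A x y

lemma injective : Function.Injective descFactorialSeriesPNat := fun _ _ h =>
  descFactorialSeries.injective_of_succ fun k => congrArg PNat.val (congrFun h k.succPNat)

end descFactorialSeriesPNat

lemma mk_eq_continuum_of_injective_of_mem {α : Type} [Countable α] [Infinite α]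
    {s : Set (α → α)} {F : Set ℕ → α → α} (hF : Function.Injective F)
    (hs : ∀ A, F A ∈ s) : #s = 𝔠 := by
  refine le_antisymm ((mk_subtype_le s).trans_eq ?_) ?_
  · rw [← power_def, mk_eq_aleph0, aleph0_power_aleph0]
  · simpa [mk_set, two_power_aleph0] using
      mk_le_of_injective (f := fun A => (⟨F A, hs A⟩ : s))
        fun _ _ h => hF (congrArg Subtype.val h)

lemma isClosed_setOf_forall_pair {ι X : Type*} [TopologicalSpace X] [DiscreteTopology X]
    (P : ι → ι → X → X → Prop) :
    IsClosed {f : ι → X | ∀ i j, P i j (f i) (f j)} := by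
  simp only [Set.ofPred_forall]
  exact isClosed_iInter fun i => isClosed_iInter fun j =>
    (isClosed_discrete {q : X × X | P i j q.1 q.2}).preimage (f := fun f : ι → X => (f i, f j))
      ((continuous_apply i).prodMk (continuous_apply j))

lemma isClosed_setOf_strictMono_progressive :
    @IsClosed (ℕ+ → ℕ+) (@Pi.topologicalSpace ℕ+ (fun _ => ℕ+) (fun _ => ⊥))
      {f : ℕ+ → ℕ+ | StrictMono f ∧ Progressive f} := by
  convert @isClosed_setOf_forall_pair ℕ+ ℕ+ ⊥ (@DiscreteTopology.mk ℕ+ ⊥ rfl)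
    (fun x y u v => (x < y → u < v) ∧
      (∀ p : ℕ, p.Prime → p ∣ (x : ℕ) → p ∣ (u : ℕ)) ∧
      (x < y → (dag ((y : ℕ) - x) u : ℤ) ∣ ((v : ℕ) : ℤ) - (u : ℕ))) using 1
  ext f
  exact ⟨fun ⟨hm, hp₁, hp₂⟩ x y => ⟨@hm x y, hp₁ x, hp₂ x y⟩,
    fun h => ⟨fun x y => (h x y).1, fun x => (h x x).2.1, fun x y => (h x y).2.2⟩⟩

theorem continuous_selfmaps_continuum :
    @IsClosed (ℕ+ → ℕ+) (@Pi.topologicalSpace ℕ+ (fun _ => ℕ+) (fun _ => ⊥))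
      {f : ℕ+ → ℕ+ | StrictMono f ∧ Progressive f} ∧
    Cardinal.mk ↥{f : ℕ+ → ℕ+ | StrictMono f ∧ Progressive f} = Cardinal.continuum ∧
    (∀ f : ℕ+ → ℕ+, StrictMono f ∧ Progressive f → Continuous f) ∧
    Cardinal.mk ↥{f : ℕ+ → ℕ+ | Continuous f} = Cardinal.continuum := by
  have hcont (f : ℕ+ → ℕ+) (hf : StrictMono f ∧ Progressive f) : Continuous f :=
    hf.2.continuous hf.1.monotone
  have hfamily (A : Set ℕ) : StrictMono (descFactorialSeriesPNat A) ∧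
      Progressive (descFactorialSeriesPNat A) :=
    ⟨descFactorialSeriesPNat.strictMono A, descFactorialSeriesPNat.progressive A⟩
  exact ⟨isClosed_setOf_strictMono_progressive,
    mk_eq_continuum_of_injective_of_mem descFactorialSeriesPNat.injective hfamily, hcont,
    mk_eq_continuum_of_injective_of_mem descFactorialSeriesPNat.injective
      fun A => hcont _ (hfamily A)⟩
end
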